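/- arXiv:2203.12139 — 2 statements merged into one kernel-verified Lean document; each statement's English description precedes it below -/
import Mathlib

section
/- Let p be an unnormalized nonnegative function on a finite product space X_1 × ... × X_n with total mass Z > 0, and let q(x) = Π_i q_i(x_i) be a full-support product distribution. The coordinate-wise mean-field update q_j'(x_j) ∝ exp( E_{q_{-j}}[ log p(x_1,...,x_n) ] ) (holding q_i for i ≠ j fixed) does not decrease the ELBO: ELBO(q_1,...,q_j',...,q_n) ≥ ELBO(q_1,...,q_j,...,q_n), where ELBO(q) = E_q[log p(x)] − Σ_i E_{q_i}[log q_i(x_i)]. -/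
/-!
Freeze every factor except the `j`-th. As a function of that factor `r`, the ELBO is
`∑ r F - ∑ r log r` plus a constant, where `F` is the expected log-joint under the other factors.
By concavity of `log` (Gibbs' inequality), `∑ r F - ∑ r log r ≤ log ∑ exp F` for every positive
probability vector `r`, with equality at `r = softmax F`, which is the CAVI update.
-/

open Finset Function Real

section UpdateSums

variable {ι : Type*} [Fintype ι] [DecidableEq ι] {X : ι → Type*}

@[to_additive]
theorem Finset.prod_erase_apply_update {M : Type*} [CommMonoid M] (f : ∀ i, X i → M)
    (x : ∀ i, X i) (j : ι) (y : X j) :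
    ∏ i ∈ univ.erase j, f i (update x j y i) = ∏ i ∈ univ.erase j, f i (x i) :=
  prod_congr rfl fun _ hi => by rw [update_of_ne (ne_of_mem_erase hi)]

@[to_additive]
theorem Finset.prod_comp_update_apply {β M : Type*} [CommMonoid M] (g : β → M)
    (f : ∀ i, X i → β) (j : ι) (r : X j → β) (x : ∀ i, X i) :
    ∏ i, g (update f j r i (x i)) = g (r (x j)) * ∏ i ∈ univ.erase j, g (f i (x i)) := by
  rw [← mul_prod_erase univ _ (mem_univ j), update_self]
  congr 1
  exact prod_congr rfl fun _ hi => by rw [update_of_ne (ne_of_mem_erase hi)]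

variable [∀ i, Fintype (X i)]

theorem Fintype.sum_sum_update {M : Type*} [AddCommMonoid M] (j : ι) (ψ : (∀ i, X i) → M) :
    ∑ x, ∑ a : X j, ψ (update x j a) = Fintype.card (X j) • ∑ x, ψ x := by
  -- `(x, a) ↦ (update x j a, x j)` is an involution of `(∀ i, X i) × X j`
  let s : (∀ i, X i) × X j → (∀ i, X i) × X j := fun xa => (update xa.1 j xa.2, xa.1 j)
  have hs : Involutive s := fun xa => Prod.ext (by simp [s]) (by simp [s])
  have h := Equiv.sum_comp hs.toPerm fun xa => ψ xa.1
  simp only [Fintype.sum_prod_type] at h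
  rw [smul_sum]
  simpa [s] using h

theorem Fintype.sum_mul_sum_update {R : Type*} [CommSemiring R] (j : ι) (g : X j → R)
    (H : (∀ i, X i) → R) :
    ∑ y, g y * ∑ x, H (update x j y) = Fintype.card (X j) * ∑ x, g (x j) * H x := by
  rw [← nsmul_eq_mul, ← Fintype.sum_sum_update j fun x => g (x j) * H x, sum_comm]
  simp [mul_sum]

theorem Fintype.sum_prod_erase_eq_card {R : Type*} [CommSemiring R] {q : ∀ i, X i → R}
    (hq : ∀ i, ∑ y, q i y = 1) (j : ι) :
    ∑ x : ∀ i, X i, ∏ i ∈ univ.erase j, q i (x i) = Fintype.card (X j) := by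
  have h := Fintype.sum_mul_sum_update j (q j) fun x => ∏ i ∈ univ.erase j, q i (x i)
  simp only [prod_erase_apply_update, ← sum_mul, hq, one_mul] at h
  simp only [h, fun x : ∀ i, X i => mul_prod_erase univ (fun i => q i (x i)) (mem_univ j),
    ← Fintype.prod_sum, hq, prod_const_one, mul_one]

end UpdateSums

namespace Real

variable {κ : Type*} [Fintype κ]

theorem sum_mul_sub_sum_mul_log_le_log_sum_exp (f : κ → ℝ) {s : κ → ℝ} (hs : ∀ y, 0 < s y)
    (hs1 : ∑ y, s y = 1) :
    ∑ y, s y * f y - ∑ y, s y * log (s y) ≤ log (∑ y, exp (f y)) := by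
  have h := strictConcaveOn_log_Ioi.concaveOn.le_map_sum (t := univ) (p := fun y => exp (f y) / s y)
    (fun y _ => (hs y).le) hs1 fun y _ => div_pos (exp_pos _) (hs y)
  simpa only [smul_eq_mul, mul_div_cancel₀ _ (hs _).ne', log_div (exp_pos _).ne' (hs _).ne',
    log_exp, mul_sub, sum_sub_distrib] using h

noncomputable def softmax (f : κ → ℝ) (y : κ) : ℝ := exp (f y) / ∑ y', exp (f y')

variable [Nonempty κ]

theorem sum_softmax (f : κ → ℝ) : ∑ y, softmax f y = 1 := by
  simp only [softmax, ← sum_div]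
  exact div_self (sum_pos (fun y _ => exp_pos (f y)) univ_nonempty).ne'

theorem sum_softmax_mul_sub_sum_softmax_mul_log (f : κ → ℝ) :
    ∑ y, softmax f y * f y - ∑ y, softmax f y * log (softmax f y) = log (∑ y, exp (f y)) := by
  have hZ : ∑ y, exp (f y) ≠ 0 := (sum_pos (fun y _ => exp_pos (f y)) univ_nonempty).ne'
  have hlog : ∀ y, log (softmax f y) = f y - log (∑ y', exp (f y')) := fun y => by
    rw [softmax, log_div (exp_pos _).ne' hZ, log_exp]
  simp only [hlog, mul_sub, sum_sub_distrib, ← sum_mul, sum_softmax, one_mul, sub_sub_cancel]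

end Real

namespace MeanField

variable {ι : Type*} [Fintype ι] [DecidableEq ι] {X : ι → Type*} [∀ i, Fintype (X i)]

noncomputable def elbo (p : (∀ i, X i) → ℝ) (Q : ∀ i, X i → ℝ) : ℝ :=
  ∑ x, (∏ i, Q i (x i)) * (log (p x) - ∑ i, log (Q i (x i)))

/-- `E_{q_{-j}}[log p(·, y)]`: the sum runs over all `x`, with `x j` overwritten by `y`, so the free
coordinate `x j` contributes a factor `card (X j)` that is divided out. -/
noncomputable def expectedLogJoint (p : (∀ i, X i) → ℝ) (q : ∀ i, X i → ℝ) (j : ι) (y : X j) : ℝ :=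
  (∑ x, (∏ i ∈ univ.erase j, q i (x i)) * log (p (update x j y))) / Fintype.card (X j)

theorem elbo_update_eq (p : (∀ i, X i) → ℝ) {q : ∀ i, X i → ℝ} (hq : ∀ i, ∑ y, q i y = 1)
    (j : ι) [Nonempty (X j)] {r : X j → ℝ} (hr : ∑ y, r y = 1) :
    elbo p (update q j r) =
      ∑ y, r y * expectedLogJoint p q j y - ∑ y, r y * log (r y) -
        (∑ x : ∀ i, X i, (∏ i ∈ univ.erase j, q i (x i)) * ∑ i ∈ univ.erase j, log (q i (x i))) /
          Fintype.card (X j) := by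
  have hc : (Fintype.card (X j) : ℝ) ≠ 0 := Nat.cast_ne_zero.2 Fintype.card_ne_zero
  have average : ∀ (g : X j → ℝ) (H : (∀ i, X i) → ℝ),
      ∑ x, g (x j) * H x = (∑ y, g y * ∑ x, H (update x j y)) / Fintype.card (X j) :=
    fun g H => by rw [Fintype.sum_mul_sum_update, mul_div_cancel_left₀ _ hc]
  set W : (∀ i, X i) → ℝ := fun x => ∏ i ∈ univ.erase j, q i (x i)
  set L : (∀ i, X i) → ℝ := fun x => ∑ i ∈ univ.erase j, log (q i (x i))
  have hterm : ∀ x, (∏ i, update q j r i (x i)) * (log (p x) - ∑ i, log (update q j r i (x i))) =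
      r (x j) * (W x * log (p x)) - r (x j) * log (r (x j)) * W x - r (x j) * (W x * L x) :=
    fun x => by rw [prod_comp_update_apply (fun t => t), sum_comp_update_apply log]; ring
  have energy : ∑ x, r (x j) * (W x * log (p x)) = ∑ y, r y * expectedLogJoint p q j y := by
    rw [average r, sum_div]
    simp only [W, prod_erase_apply_update q, expectedLogJoint, mul_div_assoc]
  have entropy : ∑ x, r (x j) * log (r (x j)) * W x = ∑ y, r y * log (r y) := by
    rw [average (fun y => r y * log (r y))]
    simp only [W, prod_erase_apply_update q, ← sum_mul, Fintype.sum_prod_erase_eq_card hq,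
      mul_div_cancel_right₀ _ hc]
  have const : ∑ x, r (x j) * (W x * L x) = (∑ x, W x * L x) / Fintype.card (X j) := by
    rw [average r]
    simp only [W, L, prod_erase_apply_update q, sum_erase_apply_update fun i z => log (q i z),
      ← sum_mul, hr, one_mul]
  simp only [elbo, hterm, sum_sub_distrib, energy, entropy, const, W, L]

end MeanField

theorem stmt_9_general {ι : Type*} [Fintype ι] [DecidableEq ι] {X : ι → Type*}
    [∀ i, Fintype (X i)] [∀ i, Nonempty (X i)]
    (p : (∀ i, X i) → ℝ)
    (q : ∀ i, X i → ℝ) (hq : ∀ i y, 0 < q i y) (hq1 : ∀ i, ∑ y, q i y = 1)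
    (j : ι) (qj' : X j → ℝ)
    (hqj' : ∀ y : X j, qj' y =
      Real.exp ((∑ x : ∀ i, X i, (∏ i ∈ Finset.univ.erase j, q i (x i)) *
          Real.log (p (Function.update x j y))) / (Fintype.card (X j)))
        / ∑ y' : X j,
            Real.exp ((∑ x : ∀ i, X i, (∏ i ∈ Finset.univ.erase j, q i (x i)) *
              Real.log (p (Function.update x j y'))) / (Fintype.card (X j))))
    (ELBO : (∀ i, X i → ℝ) → ℝ)
    (hELBO : ∀ Q : ∀ i, X i → ℝ, ELBO Q =
      ∑ x : ∀ i, X i, (∏ i, Q i (x i)) *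
        (Real.log (p x) - ∑ i, Real.log (Q i (x i)))) :
    ELBO q ≤ ELBO (Function.update q j qj') := by
  have hqj'_eq : qj' = softmax (MeanField.expectedLogJoint p q j) := funext hqj'
  have hELBO' : ELBO = MeanField.elbo p := funext hELBO
  have h_old := MeanField.elbo_update_eq p hq1 j (hq1 j)
  rw [update_eq_self] at h_old
  rw [hELBO', h_old, MeanField.elbo_update_eq p hq1 j (hqj'_eq ▸ sum_softmax _), hqj'_eq,
    sum_softmax_mul_sub_sum_softmax_mul_log]
  gcongr
  exact sum_mul_sub_sum_mul_log_le_log_sum_exp _ (hq j) (hq1 j)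

/-- CAVI monotonicity: the coordinate-wise mean-field update
q_j'(y) ∝ exp(E_{q_{-j}}[log p(x_1,…,x_n)]) does not decrease the ELBO.
The expectation over the other coordinates is written as a sum over the whole
product space divided by |X j| (the j-th coordinate is overwritten by
`Function.update`, so it contributes a factor |X j| that is divided out). -/
theorem stmt_9 {ι : Type*} [Fintype ι] [DecidableEq ι] {X : ι → Type*}
    [∀ i, Fintype (X i)] [∀ i, Nonempty (X i)]
    (p : (∀ i, X i) → ℝ) (hp : ∀ x, 0 < p x)
    (q : ∀ i, X i → ℝ) (hq : ∀ i y, 0 < q i y) (hq1 : ∀ i, ∑ y, q i y = 1)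
    (j : ι) (qj' : X j → ℝ)
    (hqj' : ∀ y : X j, qj' y =
      Real.exp ((∑ x : ∀ i, X i, (∏ i ∈ Finset.univ.erase j, q i (x i)) *
          Real.log (p (Function.update x j y))) / (Fintype.card (X j)))
        / ∑ y' : X j,
            Real.exp ((∑ x : ∀ i, X i, (∏ i ∈ Finset.univ.erase j, q i (x i)) *
              Real.log (p (Function.update x j y'))) / (Fintype.card (X j))))
    (ELBO : (∀ i, X i → ℝ) → ℝ)
    (hELBO : ∀ Q : ∀ i, X i → ℝ, ELBO Q =
      ∑ x : ∀ i, X i, (∏ i, Q i (x i)) *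
        (Real.log (p x) - ∑ i, Real.log (Q i (x i)))) :
    ELBO q ≤ ELBO (Function.update q j qj') :=
  stmt_9_general p q hq hq1 j qj' hqj' ELBO hELBO
end

section
/- Let p be a positive joint distribution on a finite product space X = X_1 × ... × X_n, n ≥ 2. The mean-field ELBO, as a function of product distributions q = Π q_i, can have strict local maxima that are not global: there exists a positive distribution p on {0,1}² such that the CAVI fixed-point equations q_1(x_1) ∝ exp(E_{q_2}[log p(x_1,x_2)]), q_2(x_2) ∝ exp(E_{q_1}[log p(x_1,x_2)]) admit at least two distinct solutions with different ELBO values. -/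
/-!
Take the "Potts" target `p x y = 9/20` if `x = y` and `1/20` otherwise. For `p` of this shape,
`∑ y, q y * log p x y = log b + q x * log (a / b)`, so a symmetric product `q ⊗ q` solves the CAVI
equations as soon as `q x * log (a / b) - log (q x)` is independent of `x`. This holds for the
uniform `q` and, since `log (a / b) = 2 log 3`, for the biased `q = (3/4, 1/4)`. Comparing the
two ELBO values reduces to `5 log 3 < 8 log 2`, i.e. `243 < 256`: the uniform fixed point is
strictly worse than the biased one.
-/

open Real Finset

variable {α β : Type*}

section ELBO

variable [Fintype α] [Fintype β]

theorem eq_exp_div_sum_exp_of_eq_log_add {q g : α → ℝ} (hq : ∀ x, 0 < q x)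
    (hsum : ∑ x, q x = 1) (c : ℝ) (hg : ∀ x, g x = log (q x) + c) (x : α) :
    q x = exp (g x) / ∑ x', exp (g x') := by
  simp only [hg, exp_add, exp_log (hq _), ← sum_mul, hsum, one_mul]
  field_simp

theorem sum_sum_mul_log_div_mul {p : α → β → ℝ} {q₁ : α → ℝ} {q₂ : β → ℝ}
    (hp : ∀ x y, p x y ≠ 0) (hq₁ : ∀ x, q₁ x ≠ 0) (hq₂ : ∀ y, q₂ y ≠ 0)
    (hs₁ : ∑ x, q₁ x = 1) (hs₂ : ∑ y, q₂ y = 1) :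
    ∑ x, ∑ y, q₁ x * q₂ y * log (p x y / (q₁ x * q₂ y)) =
      ∑ x, ∑ y, q₁ x * q₂ y * log (p x y)
        - ∑ x, q₁ x * log (q₁ x) - ∑ y, q₂ y * log (q₂ y) := by
  have hsplit : ∀ x y, q₁ x * q₂ y * log (p x y / (q₁ x * q₂ y)) =
      q₁ x * q₂ y * log (p x y) - q₂ y * (q₁ x * log (q₁ x)) - q₁ x * (q₂ y * log (q₂ y)) :=
    fun x y => by
      rw [log_div (hp x y) (mul_ne_zero (hq₁ x) (hq₂ y)), log_mul (hq₁ x) (hq₂ y)]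
      ring
  simp only [hsplit, sum_sub_distrib, ← sum_mul, ← mul_sum, hs₁, hs₂, one_mul]

end ELBO

section Potts

variable [DecidableEq α]

def potts (a b : ℝ) (x y : α) : ℝ := if x = y then a else b

variable {a b : ℝ}

theorem potts_pos (ha : 0 < a) (hb : 0 < b) (x y : α) : 0 < potts a b x y := by
  unfold potts
  split_ifs <;> assumption

theorem potts_comm (a b : ℝ) (x y : α) : potts a b x y = potts a b y x := by
  simp only [potts, eq_comm]

theorem log_potts (ha : 0 < a) (hb : 0 < b) (x y : α) :
    log (potts a b x y) = log b + if x = y then log (a / b) else 0 := by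
  unfold potts
  split_ifs
  · rw [log_div ha.ne' hb.ne']; ring
  · ring

variable [Fintype α]

theorem sum_mul_log_potts {q : α → ℝ} (hsum : ∑ y, q y = 1) (ha : 0 < a) (hb : 0 < b)
    (x : α) : ∑ y, q y * log (potts a b x y) = log b + q x * log (a / b) := by
  simp only [log_potts ha hb, mul_add, sum_add_distrib, ← sum_mul, hsum, one_mul,
    mul_ite, mul_zero, sum_ite_eq, mem_univ, if_true]

theorem sum_mul_log_potts_left {q : α → ℝ} (hsum : ∑ x, q x = 1) (ha : 0 < a) (hb : 0 < b)
    (y : α) : ∑ x, q x * log (potts a b x y) = log b + q y * log (a / b) := by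
  simp only [potts_comm a b _ y]
  exact sum_mul_log_potts hsum ha hb y

theorem sum_sum_mul_log_potts {q₁ q₂ : α → ℝ} (hs₁ : ∑ x, q₁ x = 1) (hs₂ : ∑ y, q₂ y = 1)
    (ha : 0 < a) (hb : 0 < b) :
    ∑ x, ∑ y, q₁ x * q₂ y * log (potts a b x y) =
      log b + (∑ x, q₁ x * q₂ x) * log (a / b) := by
  simp only [mul_assoc, ← mul_sum, sum_mul_log_potts hs₂ ha hb, mul_add, sum_add_distrib,
    ← sum_mul, hs₁, one_mul]
  simp only [← mul_assoc, ← sum_mul]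

theorem sum_sum_mul_log_potts_div_mul {q₁ q₂ : α → ℝ} (hq₁ : ∀ x, 0 < q₁ x)
    (hq₂ : ∀ y, 0 < q₂ y) (hs₁ : ∑ x, q₁ x = 1) (hs₂ : ∑ y, q₂ y = 1) (ha : 0 < a) (hb : 0 < b) :
    ∑ x, ∑ y, q₁ x * q₂ y * log (potts a b x y / (q₁ x * q₂ y)) =
      log b + (∑ x, q₁ x * q₂ x) * log (a / b)
        - ∑ x, q₁ x * log (q₁ x) - ∑ y, q₂ y * log (q₂ y) := by
  rw [sum_sum_mul_log_div_mul (fun x y => (potts_pos ha hb x y).ne') (fun x => (hq₁ x).ne')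
    (fun y => (hq₂ y).ne') hs₁ hs₂, sum_sum_mul_log_potts hs₁ hs₂ ha hb]

theorem potts_cavi_fixed_point_of_eq_log_add {q : α → ℝ} (hq : ∀ x, 0 < q x) (hsum : ∑ x, q x = 1)
    (ha : 0 < a) (hb : 0 < b) (c : ℝ) (hc : ∀ x, q x * log (a / b) = log (q x) + c) :
    (∀ x, q x = exp (∑ y, q y * log (potts a b x y))
        / ∑ x', exp (∑ y, q y * log (potts a b x' y))) ∧
    (∀ y, q y = exp (∑ x, q x * log (potts a b x y))
        / ∑ y', exp (∑ x, q x * log (potts a b x y'))) := by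
  have hfix := eq_exp_div_sum_exp_of_eq_log_add hq hsum (log b + c)
    (g := fun x => log b + q x * log (a / b)) fun x => by rw [hc]; ring
  simp only [sum_mul_log_potts hsum ha hb, sum_mul_log_potts_left hsum ha hb]
  exact ⟨hfix, hfix⟩

end Potts

theorem five_mul_log_three_lt_eight_mul_log_two : 5 * log 3 < 8 * log 2 := by
  have h := log_lt_log (by norm_num) (show (3 : ℝ) ^ 5 < 2 ^ 8 by norm_num)
  simpa only [log_pow, Nat.cast_ofNat] using h

theorem log_nine : log 9 = 2 * log 3 := by
  rw [show (9 : ℝ) = 3 ^ 2 by norm_num, log_pow, Nat.cast_ofNat]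

theorem log_four : log 4 = 2 * log 2 := by
  rw [show (4 : ℝ) = 2 ^ 2 by norm_num, log_pow, Nat.cast_ofNat]

/-- Multimodality of the mean-field ELBO: there is a positive distribution p
on {0,1}² for which the CAVI fixed-point equations admit two distinct
solutions with different ELBO values. -/
theorem stmt_18 :
    ∃ p : Bool → Bool → ℝ,
      (∀ x y, 0 < p x y) ∧ (∑ x, ∑ y, p x y = 1) ∧
      ∃ q1 q2 q1' q2' : Bool → ℝ,
        (∀ x, 0 < q1 x) ∧ (∑ x, q1 x = 1) ∧
        (∀ y, 0 < q2 y) ∧ (∑ y, q2 y = 1) ∧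
        (∀ x, 0 < q1' x) ∧ (∑ x, q1' x = 1) ∧
        (∀ y, 0 < q2' y) ∧ (∑ y, q2' y = 1) ∧
        -- CAVI fixed-point equations for (q1, q2)
        (∀ x, q1 x = Real.exp (∑ y, q2 y * Real.log (p x y))
            / ∑ x', Real.exp (∑ y, q2 y * Real.log (p x' y))) ∧
        (∀ y, q2 y = Real.exp (∑ x, q1 x * Real.log (p x y))
            / ∑ y', Real.exp (∑ x, q1 x * Real.log (p x y'))) ∧
        -- CAVI fixed-point equations for (q1', q2')
        (∀ x, q1' x = Real.exp (∑ y, q2' y * Real.log (p x y))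
            / ∑ x', Real.exp (∑ y, q2' y * Real.log (p x' y))) ∧
        (∀ y, q2' y = Real.exp (∑ x, q1' x * Real.log (p x y))
            / ∑ y', Real.exp (∑ x, q1' x * Real.log (p x y'))) ∧
        -- the two solutions are distinct and have different ELBO values
        (q1, q2) ≠ (q1', q2') ∧
        (∑ x, ∑ y, q1 x * q2 y * Real.log (p x y / (q1 x * q2 y)))
          ≠ ∑ x, ∑ y, q1' x * q2' y * Real.log (p x y / (q1' x * q2' y)) := by
  set u : Bool → ℝ := fun _ => 1 / 2
  set v : Bool → ℝ := fun x => if x then 1 / 4 else 3 / 4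
  have hu : ∀ x, 0 < u x := fun _ => by norm_num
  have hv : ∀ x, 0 < v x := fun x => by cases x <;> norm_num [v]
  have hsu : ∑ x, u x = 1 := by norm_num [u]
  have hsv : ∑ x, v x = 1 := by norm_num [v]
  have ha : (0 : ℝ) < 9 / 20 := by norm_num
  have hb : (0 : ℝ) < 1 / 20 := by norm_num
  have hratio : log ((9 / 20 : ℝ) / (1 / 20)) = 2 * log 3 := by norm_num [log_nine]
  obtain ⟨hu₁, hu₂⟩ := potts_cavi_fixed_point_of_eq_log_add hu hsu ha hb (log 3 + log 2) fun x => by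
    rw [hratio]; simp only [u, one_div, log_inv]; ring
  obtain ⟨hv₁, hv₂⟩ := potts_cavi_fixed_point_of_eq_log_add hv hsv ha hb (log 3 / 2 + 2 * log 2) fun x => by
    rw [hratio]; cases x <;> norm_num [v, log_div, log_four] <;> ring
  refine ⟨potts (9 / 20) (1 / 20), potts_pos ha hb, by norm_num [potts], u, u, v, v,
    hu, hsu, hu, hsu, hv, hsv, hv, hsv, hu₁, hu₂, hv₁, hv₂, ?_, ?_⟩
  · intro h
    have := congrFun (congrArg Prod.fst h) true
    norm_num [u, v] at this
  · refine ne_of_lt ?_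
    rw [sum_sum_mul_log_potts_div_mul hu hu hsu hsu ha hb,
      sum_sum_mul_log_potts_div_mul hv hv hsv hsv ha hb, hratio]
    norm_num [u, v, log_div, log_four]
    linarith [five_mul_log_three_lt_eight_mul_log_two]
end
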